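/- Let Λ_N = 2 Σ_{m=1}^N ξ_m ln(ξ_m/(np_m)) built from independent ξ_m ~ Poisson(np_m) with np_m = λ for all m (equal cells, p_m = 1/N, λ = n/N), and set g(x) = x ln(x/λ) − (x−λ) (with 0·ln 0 = 0). Then E[g(ξ_m)] = 1/2 + O(1/λ) as λ → ∞; i.e., there exist constants C, λ_0 such that |E[ξ ln(ξ/λ)] − λ·0 − 1/2| ≤ C/λ for ξ ~ Poisson(λ) and λ ≥ λ_0. -/

import Mathlib

/-!
Write `k log (k/λ) = (k - λ) + λ φ(k/λ)` with `φ(t) = t log t - (t - 1)`. For `t ≥ 0` and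
`u = t - 1`, `φ` lies between its Taylor polynomial `u²/2 - u³/6` at `1` and that polynomial plus
`u⁴/3`; the upper bound is `t` times the Taylor bound `log t ≤ u - u²/2 + u³/3`. Taking Poisson
expectations leaves only the central moments `E(ξ-λ) = 0`, `E(ξ-λ)² = E(ξ-λ)³ = λ` and
`E(ξ-λ)⁴ = 3λ² + λ`, which follow from `E[ξ f(ξ)] = λ E[f(ξ+1)]`. Hence
`1/2 - 1/(6λ) ≤ E[ξ log (ξ/λ)] ≤ 1/2 + 5/(6λ) + 1/(3λ²)`.
-/

open Real
open scoped Nat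

theorem le_of_hasDerivAt_of_sub_mul_nonneg {f f' : ℝ → ℝ} {a x : ℝ}
    (hf : ContinuousOn f (Set.uIcc a x))
    (hderiv : ∀ y ∈ Set.uIoo a x, HasDerivAt f (f' y) y)
    (hsign : ∀ y ∈ Set.uIoo a x, 0 ≤ (y - a) * f' y) : f a ≤ f x := by
  rcases le_total a x with hax | hxa
  · rw [Set.uIcc_of_le hax] at hf
    rw [Set.uIoo_of_le hax] at hderiv hsign
    refine monotoneOn_of_hasDerivWithinAt_nonneg (f' := f') (convex_Icc a x) hf (fun y hy => ?_)
      (fun y hy => ?_) (Set.left_mem_Icc.2 hax) (Set.right_mem_Icc.2 hax) hax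
    · rw [interior_Icc] at hy ⊢
      exact (hderiv y hy).hasDerivWithinAt
    · rw [interior_Icc] at hy
      exact nonneg_of_mul_nonneg_right (hsign y hy) (sub_pos.2 hy.1)
  · rw [Set.uIcc_of_ge hxa] at hf
    rw [Set.uIoo_of_ge hxa] at hderiv hsign
    refine antitoneOn_of_hasDerivWithinAt_nonpos (f' := f') (convex_Icc x a) hf (fun y hy => ?_)
      (fun y hy => ?_) (Set.left_mem_Icc.2 hxa) (Set.right_mem_Icc.2 hxa) hxa
    · rw [interior_Icc] at hy ⊢
      exact (hderiv y hy).hasDerivWithinAt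
    · rw [interior_Icc] at hy
      exact nonpos_of_mul_nonneg_right (hsign y hy) (sub_neg.2 hy.2)

theorem exists_hasSum_of_le_of_le {ι : Type*} {f g h : ι → ℝ} {a b : ℝ} (hf : HasSum f a)
    (hh : HasSum h b) (hfg : ∀ i, f i ≤ g i) (hgh : ∀ i, g i ≤ h i) :
    ∃ s, HasSum g s ∧ a ≤ s ∧ s ≤ b := by
  have hg : Summable g := by
    simpa using (Summable.of_nonneg_of_le (fun i => sub_nonneg.2 (hfg i))
      (fun i => sub_le_sub_right (hgh i) (f i)) (hh.summable.sub hf.summable)).add hf.summable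
  exact ⟨_, hg.hasSum, hasSum_le hfg hf hg.hasSum, hasSum_le hgh hg.hasSum hh⟩

namespace Real

theorem log_le_cubic_taylor {t : ℝ} (ht : 0 < t) :
    log t ≤ (t - 1) - (t - 1) ^ 2 / 2 + (t - 1) ^ 3 / 3 := by
  let f : ℝ → ℝ := fun s => (s - 1) - (s - 1) ^ 2 / 2 + (s - 1) ^ 3 / 3 - log s
  have hderiv : ∀ s, 0 < s → HasDerivAt f ((s - 1) ^ 3 / s) s := by
    intro s hs
    have hc := (hasDerivAt_id' s).sub_const 1
    refine (((hc.sub ((hc.fun_pow 2).div_const 2)).add ((hc.fun_pow 3).div_const 3)).sub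
      (hasDerivAt_log hs.ne')).congr_deriv ?_
    field_simp
    ring
  have hpos : ∀ s ∈ Set.uIcc 1 t, 0 < s := fun s hs => lt_of_lt_of_le (lt_min one_pos ht) hs.1
  have hmono : f 1 ≤ f t := by
    refine le_of_hasDerivAt_of_sub_mul_nonneg
      (fun s hs => (hderiv s (hpos s hs)).continuousAt.continuousWithinAt)
      (fun s hs => hderiv s (hpos s (Set.Ioo_subset_Icc_self hs))) (fun s hs => ?_)
    have hs' := hpos s (Set.Ioo_subset_Icc_self hs)
    rw [show (s - 1) * ((s - 1) ^ 3 / s) = (s - 1) ^ 4 / s by ring]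
    positivity
  simpa [f] using hmono

theorem sub_one_mul_log_sub_quadratic_taylor_nonneg {t : ℝ} (ht : 0 < t) :
    0 ≤ (t - 1) * (log t - ((t - 1) - (t - 1) ^ 2 / 2)) := by
  let g : ℝ → ℝ := fun s => log s - ((s - 1) - (s - 1) ^ 2 / 2)
  have hmono : MonotoneOn g (Set.Ioi 0) := by
    refine monotoneOn_of_hasDerivWithinAt_nonneg (f' := fun s => (s - 1) ^ 2 / s)
      (convex_Ioi 0) (fun s hs => ?_) (fun s hs => ?_) (fun s hs => ?_)
    · exact (continuousAt_log (ne_of_gt hs)).continuousWithinAt.sub (by fun_prop)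
    · rw [interior_Ioi] at hs ⊢
      have hs' : 0 < s := hs
      have hc := (hasDerivAt_id' s).sub_const 1
      refine ((hasDerivAt_log hs'.ne').sub (hc.sub ((hc.fun_pow 2).div_const 2))).congr_deriv ?_
        |>.hasDerivWithinAt
      field_simp
      ring
    · rw [interior_Ioi] at hs
      have hs' : 0 < s := hs
      positivity
  have hg1 : g 1 = 0 := by simp [g]
  rcases le_total 1 t with h1t | ht1
  · exact mul_nonneg (sub_nonneg.2 h1t) (hg1 ▸ hmono (Set.mem_Ioi.2 one_pos) ht h1t)
  · exact mul_nonneg_of_nonpos_of_nonpos (sub_nonpos.2 ht1)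
      (hg1 ▸ hmono ht (Set.mem_Ioi.2 one_pos) ht1)

theorem cubic_taylor_le_mul_log {t : ℝ} (ht : 0 ≤ t) :
    (t - 1) + (t - 1) ^ 2 / 2 - (t - 1) ^ 3 / 6 ≤ t * log t := by
  let F : ℝ → ℝ := fun s => s * log s - ((s - 1) + (s - 1) ^ 2 / 2 - (s - 1) ^ 3 / 6)
  have hpos : ∀ s ∈ Set.uIoo 1 t, 0 < s := fun s hs => lt_of_le_of_lt (le_min zero_le_one ht) hs.1
  have hmono : F 1 ≤ F t := by
    refine le_of_hasDerivAt_of_sub_mul_nonneg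
      (f' := fun s => log s - ((s - 1) - (s - 1) ^ 2 / 2))
      (continuous_mul_log.sub (by fun_prop)).continuousOn (fun s hs => ?_)
      (fun s hs => sub_one_mul_log_sub_quadratic_taylor_nonneg (hpos s hs))
    have hc := (hasDerivAt_id' s).sub_const 1
    refine ((hasDerivAt_mul_log (hpos s hs).ne').sub
      ((hc.add ((hc.fun_pow 2).div_const 2)).sub ((hc.fun_pow 3).div_const 6))).congr_deriv ?_
    ring
  simpa [F] using hmono

theorem mul_log_le_cubic_taylor_add_quartic {t : ℝ} (ht : 0 ≤ t) :
    t * log t ≤ (t - 1) + (t - 1) ^ 2 / 2 - (t - 1) ^ 3 / 6 + (t - 1) ^ 4 / 3 := by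
  rcases ht.eq_or_lt with rfl | ht
  · norm_num
  calc t * log t ≤ t * ((t - 1) - (t - 1) ^ 2 / 2 + (t - 1) ^ 3 / 3) :=
        mul_le_mul_of_nonneg_left (log_le_cubic_taylor ht) ht.le
    _ = (t - 1) + (t - 1) ^ 2 / 2 - (t - 1) ^ 3 / 6 + (t - 1) ^ 4 / 3 := by ring

theorem sub_add_taylor_le_mul_log_div {x l : ℝ} (hx : 0 ≤ x) (hl : 0 < l) :
    (x - l) + (x - l) ^ 2 / (2 * l) - (x - l) ^ 3 / (6 * l ^ 2) ≤ x * log (x / l) := by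
  calc (x - l) + (x - l) ^ 2 / (2 * l) - (x - l) ^ 3 / (6 * l ^ 2)
      = l * ((x / l - 1) + (x / l - 1) ^ 2 / 2 - (x / l - 1) ^ 3 / 6) := by field_simp
    _ ≤ l * (x / l * log (x / l)) :=
        mul_le_mul_of_nonneg_left (cubic_taylor_le_mul_log (div_nonneg hx hl.le)) hl.le
    _ = x * log (x / l) := by field_simp

theorem mul_log_div_le_sub_add_taylor_add_quartic {x l : ℝ} (hx : 0 ≤ x) (hl : 0 < l) :
    x * log (x / l) ≤
      (x - l) + (x - l) ^ 2 / (2 * l) - (x - l) ^ 3 / (6 * l ^ 2) + (x - l) ^ 4 / (3 * l ^ 3) := by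
  calc x * log (x / l) = l * (x / l * log (x / l)) := by field_simp
    _ ≤ l * ((x / l - 1) + (x / l - 1) ^ 2 / 2 - (x / l - 1) ^ 3 / 6 + (x / l - 1) ^ 4 / 3) :=
        mul_le_mul_of_nonneg_left
          (mul_log_le_cubic_taylor_add_quartic (div_nonneg hx hl.le)) hl.le
    _ = _ := by field_simp

end Real

noncomputable def poissonWeight (l : ℝ) (k : ℕ) : ℝ := exp (-l) * l ^ k / k !

theorem poissonWeight_nonneg {l : ℝ} (hl : 0 ≤ l) (k : ℕ) : 0 ≤ poissonWeight l k := by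
  unfold poissonWeight; positivity

theorem poissonWeight_succ_mul (l : ℝ) (k : ℕ) :
    poissonWeight l (k + 1) * (k + 1) = l * poissonWeight l k := by
  unfold poissonWeight
  rw [Nat.factorial_succ]
  push_cast
  field_simp
  ring

theorem hasSum_poissonWeight (l : ℝ) : HasSum (poissonWeight l) 1 := by
  have h := (NormedSpace.expSeries_div_hasSum_exp l).mul_left (exp (-l))
  rw [← exp_eq_exp_ℝ, ← exp_add, neg_add_cancel, exp_zero] at h
  show HasSum (fun k => exp (-l) * l ^ k / k !) 1
  simpa only [mul_div_assoc] using h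

theorem HasSum.poissonWeight_mul_nat_mul {l : ℝ} {f : ℕ → ℝ} {s : ℝ}
    (h : HasSum (fun k => poissonWeight l k * f (k + 1)) s) :
    HasSum (fun k : ℕ => poissonWeight l k * (k * f k)) (l * s) := by
  rw [← hasSum_nat_add_iff' 1]
  simpa [← mul_assoc, poissonWeight_succ_mul] using h.mul_left l

theorem hasSum_poissonWeight_mul_sub_pow_succ {l : ℝ} {n : ℕ} {s t : ℝ}
    (hs : HasSum (fun k : ℕ => poissonWeight l k * ((k : ℝ) - l + 1) ^ n) s)
    (ht : HasSum (fun k : ℕ => poissonWeight l k * ((k : ℝ) - l) ^ n) t) :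
    HasSum (fun k : ℕ => poissonWeight l k * ((k : ℝ) - l) ^ (n + 1)) (l * (s - t)) := by
  have hshift : HasSum (fun k : ℕ => poissonWeight l k * (((k + 1 : ℕ) : ℝ) - l) ^ n) s :=
    hs.congr_fun fun k => by push_cast; ring
  have h := (hshift.poissonWeight_mul_nat_mul (f := fun k : ℕ => ((k : ℝ) - l) ^ n)).sub
    (ht.mul_left l)
  rw [← mul_sub] at h
  exact h.congr_fun fun k => by ring

theorem hasSum_poissonWeight_mul_sub_pow_zero (l : ℝ) :
    HasSum (fun k : ℕ => poissonWeight l k * ((k : ℝ) - l) ^ 0) 1 := by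
  simpa using hasSum_poissonWeight l

theorem hasSum_poissonWeight_mul_sub_pow_one (l : ℝ) :
    HasSum (fun k : ℕ => poissonWeight l k * ((k : ℝ) - l) ^ 1) 0 := by
  have h0 := hasSum_poissonWeight_mul_sub_pow_zero l
  simpa using hasSum_poissonWeight_mul_sub_pow_succ (h0.congr_fun fun k => by ring) h0

theorem hasSum_poissonWeight_mul_sub_pow_two (l : ℝ) :
    HasSum (fun k : ℕ => poissonWeight l k * ((k : ℝ) - l) ^ 2) l := by
  have h0 := hasSum_poissonWeight_mul_sub_pow_zero l
  have h1 := hasSum_poissonWeight_mul_sub_pow_one l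
  simpa using hasSum_poissonWeight_mul_sub_pow_succ
    ((h1.add h0).congr_fun fun k => by ring) h1

theorem hasSum_poissonWeight_mul_sub_pow_three (l : ℝ) :
    HasSum (fun k : ℕ => poissonWeight l k * ((k : ℝ) - l) ^ 3) l := by
  have h0 := hasSum_poissonWeight_mul_sub_pow_zero l
  have h1 := hasSum_poissonWeight_mul_sub_pow_one l
  have h2 := hasSum_poissonWeight_mul_sub_pow_two l
  simpa using hasSum_poissonWeight_mul_sub_pow_succ
    ((h2.add ((h1.mul_left 2).add h0)).congr_fun fun k => by ring) h2

theorem hasSum_poissonWeight_mul_sub_pow_four (l : ℝ) :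
    HasSum (fun k : ℕ => poissonWeight l k * ((k : ℝ) - l) ^ 4) (3 * l ^ 2 + l) := by
  have h0 := hasSum_poissonWeight_mul_sub_pow_zero l
  have h1 := hasSum_poissonWeight_mul_sub_pow_one l
  have h2 := hasSum_poissonWeight_mul_sub_pow_two l
  have h3 := hasSum_poissonWeight_mul_sub_pow_three l
  convert hasSum_poissonWeight_mul_sub_pow_succ
    ((h3.add ((h2.mul_left 3).add ((h1.mul_left 3).add h0))).congr_fun fun k => by ring) h3
    using 1
  ring

theorem exists_hasSum_poissonWeight_mul_mul_log_div {l : ℝ} (hl : 0 < l) :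
    ∃ s, HasSum (fun k : ℕ => poissonWeight l k * (k * log (k / l))) s ∧
      1 / 2 - 1 / (6 * l) ≤ s ∧ s ≤ 1 / 2 + 5 / (6 * l) + 1 / (3 * l ^ 2) := by
  have h1 := hasSum_poissonWeight_mul_sub_pow_one l
  have h2 := (hasSum_poissonWeight_mul_sub_pow_two l).div_const (2 * l)
  have h3 := (hasSum_poissonWeight_mul_sub_pow_three l).div_const (6 * l ^ 2)
  have h4 := (hasSum_poissonWeight_mul_sub_pow_four l).div_const (3 * l ^ 3)
  have hw := poissonWeight_nonneg hl.le
  obtain ⟨s, hs, hlower, hupper⟩ := exists_hasSum_of_le_of_le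
    (g := fun k : ℕ => poissonWeight l k * (k * log (k / l))) ((h1.add h2).sub h3)
    (((h1.add h2).sub h3).add h4)
    (fun k => le_of_eq_of_le (by ring)
      (mul_le_mul_of_nonneg_left (sub_add_taylor_le_mul_log_div k.cast_nonneg hl) (hw k)))
    (fun k => le_of_le_of_eq
      (mul_le_mul_of_nonneg_left (mul_log_div_le_sub_add_taylor_add_quartic k.cast_nonneg hl)
        (hw k)) (by ring))
  refine ⟨s, hs, le_of_eq_of_le ?_ hlower, le_of_le_of_eq hupper ?_⟩ <;> field_simp <;> ring

/-- For `ξ ~ Poisson(lam)`, `E[ξ ln(ξ/lam)] = 1/2 + O(1/lam)` as `lam → ∞`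
(with the convention `0 · ln 0 = 0`): there exist constants `C, lam₀` such that
`|E[ξ ln(ξ/lam)] − 1/2| ≤ C/lam` for all `lam ≥ lam₀`. -/
theorem poisson_x_log_x_expectation :
    ∃ C lam₀ : ℝ, 0 < C ∧ 0 < lam₀ ∧ ∀ lam : ℝ, lam₀ ≤ lam →
      |(∑' k : ℕ, (Real.exp (-lam) * lam ^ k / Nat.factorial k) *
          ((k : ℝ) * Real.log ((k : ℝ) / lam))) - 1 / 2| ≤ C / lam := by
  refine ⟨7 / 6, 1, by norm_num, one_pos, fun lam hlam => ?_⟩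
  have hlam0 : 0 < lam := one_pos.trans_le hlam
  obtain ⟨s, hs, hlower, hupper⟩ := exists_hasSum_poissonWeight_mul_mul_log_div hlam0
  simp only [poissonWeight] at hs
  rw [hs.tsum_eq, abs_le]
  have hsq : 1 / (3 * lam ^ 2) ≤ 1 / (3 * lam) := by gcongr; nlinarith
  have hlower_le : 1 / (6 * lam) ≤ 7 / 6 / lam := by rw [div_div]; gcongr; norm_num
  have hupper_eq : 5 / (6 * lam) + 1 / (3 * lam) = 7 / 6 / lam := by ring
  constructor <;> linarith
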